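/- arXiv:1206.1457 — 3 statements merged into one kernel-verified Lean document; each statement's English description precedes it below -/
import Mathlib

section
/- For all real numbers a, b > 0, one has (√a − √b)² ≤ a(log a − log b) + b − a. -/
/-! Apply `log t ≥ 1 - 1/t` at `t = √a / √b` and multiply by `2a`: this gives
`a (log a - log b) ≥ 2a - 2√(ab)`, and adding `b - a` yields `a + b - 2√(ab) = (√a - √b)²`. -/

open Real

lemma Real.sub_le_mul_log_sub_log {x y : ℝ} (hx : 0 < x) (hy : 0 < y) :
    x - y ≤ x * (log x - log y) := by
  have h := one_sub_inv_le_log_of_pos (div_pos hx hy)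
  rw [log_div hx.ne' hy.ne', inv_div] at h
  calc x - y = x * (1 - y / x) := by field_simp
    _ ≤ x * (log x - log y) := mul_le_mul_of_nonneg_left h hx.le

theorem sqrt_diff_sq_le (a b : ℝ) (ha : 0 < a) (hb : 0 < b) :
    (Real.sqrt a - Real.sqrt b) ^ 2 ≤ a * (Real.log a - Real.log b) + b - a := by
  have key := sub_le_mul_log_sub_log (sqrt_pos.2 ha) (sqrt_pos.2 hb)
  rw [log_sqrt ha.le, log_sqrt hb.le] at key
  have hsa := sq_sqrt ha.le
  have hsb := sq_sqrt hb.le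
  calc (√a - √b) ^ 2 = 2 * √a * (√a - √b) + b - a := by linear_combination hsb - hsa
    _ ≤ 2 * √a * (√a * (log a / 2 - log b / 2)) + b - a := by
      gcongr
    _ = a * (log a - log b) + b - a := by linear_combination (log a - log b) * hsa
end

section
/- For all real numbers a > 0 and b ≥ b₀ > 0, one has a(log a − log b) + b − a ≤ (1/b₀)(a − b)², where log is the natural logarithm. -/
open Real

theorem mul_log_sub_log_add_sub_le_sq_div {a b : ℝ} (ha : 0 < a) (hb : 0 < b) :
    a * (log a - log b) + b - a ≤ (a - b) ^ 2 / b := by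
  have hlog : log a - log b ≤ a / b - 1 := by
    rw [← log_div ha.ne' hb.ne']
    exact log_le_sub_one_of_pos (div_pos ha hb)
  calc a * (log a - log b) + b - a ≤ a * (a / b - 1) + b - a := by gcongr
    _ = (a - b) ^ 2 / b := by field_simp; ring

theorem log_quotient_upper (a b b₀ : ℝ) (ha : 0 < a) (hb₀ : 0 < b₀) (hb : b₀ ≤ b) :
    a * (Real.log a - Real.log b) + b - a ≤ (1 / b₀) * (a - b) ^ 2 := by
  calc a * (log a - log b) + b - a ≤ (a - b) ^ 2 / b :=
        mul_log_sub_log_add_sub_le_sq_div ha (hb₀.trans_le hb)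
    _ ≤ (a - b) ^ 2 / b₀ := div_le_div_of_nonneg_left (sq_nonneg _) hb₀ hb
    _ = (1 / b₀) * (a - b) ^ 2 := by ring
end

section
/- Let f, g, h be nonnegative locally integrable functions on (t₀,∞) with f absolutely continuous and f'(t) ≤ g(t)f(t) + h(t) for a.e. t ≥ t₀. If there exist r, a₁, a₂, a₃ > 0 such that for all t ≥ t₀: ∫ₜ^{t+r} f ≤ a₁, ∫ₜ^{t+r} g ≤ a₂, and ∫ₜ^{t+r} h ≤ a₃, then f(t+r) ≤ (a₁/r + a₃)·exp(a₂) for all t ≥ t₀. -/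
/-!
For `t < s ≤ t + r`, the integrating factor `exp (-∫ₛ g)` turns `f' ≤ g f + h` into
`(f exp (-∫ₛ g))' ≤ h` almost everywhere; since `f` is absolutely continuous this integrates to
`f (t + r) ≤ (f s + a₃) exp a₂`. Averaging over `s ∈ (t, t + r]` and using `∫ f ≤ a₁` bounds
`f (t + r)`.
-/

open MeasureTheory intervalIntegral Set Filter

namespace AbsolutelyContinuousOnInterval

variable {X Y F : Type*} [PseudoMetricSpace X] [PseudoMetricSpace Y] [SeminormedAddCommGroup F]
  {a b : ℝ}

theorem congr {f g : ℝ → X} (hf : AbsolutelyContinuousOnInterval f a b)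
    (hfg : EqOn f g (uIcc a b)) : AbsolutelyContinuousOnInterval g a b := by
  refine hf.congr' (eventually_inf_principal.2 (Eventually.of_forall fun E hE => ?_))
  refine Finset.sum_congr rfl fun i hi => ?_
  rw [hfg (hE.1 i hi).1, hfg (hE.1 i hi).2]

theorem _root_.LipschitzOnWith.comp_absolutelyContinuousOnInterval {φ : X → Y} {K : NNReal}
    {s : Set X} {f : ℝ → X} (hφ : LipschitzOnWith K φ s)
    (hf : AbsolutelyContinuousOnInterval f a b) (hfs : MapsTo f (uIcc a b) s) :
    AbsolutelyContinuousOnInterval (φ ∘ f) a b := by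
  refine squeeze_zero' (Eventually.of_forall fun E => Finset.sum_nonneg fun _ _ => dist_nonneg)
    ?_ (by simpa using Tendsto.const_mul (K : ℝ) hf)
  refine eventually_inf_principal.2 (Eventually.of_forall fun E hE => ?_)
  rw [Finset.mul_sum]
  exact Finset.sum_le_sum fun i hi =>
    hφ.dist_le_mul _ (hfs (hE.1 i hi).1) _ (hfs (hE.1 i hi).2)

theorem _root_.LocallyLipschitz.comp_absolutelyContinuousOnInterval {φ : F → Y} {f : ℝ → F}
    (hφ : LocallyLipschitz φ) (hf : AbsolutelyContinuousOnInterval f a b) :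
    AbsolutelyContinuousOnInterval (φ ∘ f) a b := by
  have hcpt : IsCompact (f '' uIcc a b) := isCompact_uIcc.image_of_continuousOn hf.continuousOn
  obtain ⟨K, hK⟩ := LocallyLipschitzOn.exists_lipschitzOnWith_of_compact hcpt hφ.locallyLipschitzOn
  exact hK.comp_absolutelyContinuousOnInterval hf (mapsTo_image f _)

theorem of_hasDerivAt {f f' : ℝ → ℝ} (hf : ∀ x ∈ uIcc a b, HasDerivAt f (f' x) x)
    (hf' : IntervalIntegrable f' volume a b) : AbsolutelyContinuousOnInterval f a b := by
  have hconst : AbsolutelyContinuousOnInterval (fun _ => f a) a b :=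
    (LipschitzWith.const (f a)).lipschitzOnWith.absolutelyContinuousOnInterval
  refine (hconst.add (hf'.absolutelyContinuousOnInterval_intervalIntegral left_mem_uIcc)).congr
    fun x hx => ?_
  have hsub : uIcc a x ⊆ uIcc a b := uIcc_subset_uIcc_left hx
  simp [integral_eq_sub_of_hasDerivAt (fun y hy => hf y (hsub hy)) (hf'.mono_set hsub)]

theorem sub_le_integral_of_ae_deriv_le {u h : ℝ → ℝ} (hab : a ≤ b)
    (hu : AbsolutelyContinuousOnInterval u a b) (hh : IntervalIntegrable h volume a b)
    (hle : ∀ᵐ x, x ∈ Ioc a b → deriv u x ≤ h x) :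
    u b - u a ≤ ∫ x in a..b, h x := by
  rw [← hu.integral_deriv_eq_sub, integral_of_le hab, integral_of_le hab]
  exact setIntegral_mono_ae_restrict hu.intervalIntegrable_deriv.1 hh.1
    ((ae_restrict_iff' measurableSet_Ioc).2 hle)

end AbsolutelyContinuousOnInterval

theorem intervalIntegral.integral_ge_of_const_le {φ : ℝ → ℝ} {a b c : ℝ} (hab : a ≤ b)
    (hφc : ∀ x ∈ Ioc a b, c ≤ φ x) (hφ : IntervalIntegrable φ volume a b) :
    (b - a) * c ≤ ∫ x in a..b, φ x := by
  simpa [integral_of_le hab, Real.volume_real_Ioc, hab] using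
    setIntegral_ge_of_const_le measurableSet_Ioc measure_Ioc_lt_top.ne hφc hφ.1

theorem le_mul_exp_integral_of_deriv_le_mul_add {f f' g h : ℝ → ℝ} {a b : ℝ} (hab : a ≤ b)
    (hf : ∀ x ∈ Icc a b, HasDerivAt f (f' x) x) (hf' : IntervalIntegrable f' volume a b)
    (hg : IntervalIntegrable g volume a b) (hh : IntervalIntegrable h volume a b)
    (hg0 : ∀ᵐ x, x ∈ Ioc a b → 0 ≤ g x) (hh0 : ∀ᵐ x, x ∈ Ioc a b → 0 ≤ h x)
    (hineq : ∀ᵐ x, x ∈ Ioc a b → f' x ≤ g x * f x + h x) :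
    f b ≤ (f a + ∫ x in a..b, h x) * Real.exp (∫ x in a..b, g x) := by
  set G := fun x => ∫ y in a..x, g y
  set E := fun x => Real.exp (-G x)
  have hG_nonneg : ∀ x ∈ Icc a b, 0 ≤ G x := by
    intro x hx
    rw [show G x = _ from integral_of_le hx.1]
    exact setIntegral_nonneg_of_ae_restrict <| (ae_restrict_iff' measurableSet_Ioc).2 <|
      hg0.mono fun y hy hyx => hy ⟨hyx.1, hyx.2.trans hx.2⟩
  have hfAC : AbsolutelyContinuousOnInterval f a b :=
    .of_hasDerivAt (by rwa [uIcc_of_le hab]) hf'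
  have hEAC : AbsolutelyContinuousOnInterval E a b :=
    Real.contDiff_exp.locallyLipschitz.comp_absolutelyContinuousOnInterval
      (hg.absolutelyContinuousOnInterval_intervalIntegral left_mem_uIcc).fun_neg
  have hderiv_le : ∀ᵐ x, x ∈ Ioc a b → deriv (fun x => f x * E x) x ≤ h x := by
    filter_upwards [hg.ae_hasDerivAt_integral, hh0, hineq] with x hGx hhx hx hmem
    have hmem' : x ∈ Icc a b := Ioc_subset_Icc_self hmem
    rw [uIcc_of_le hab] at hGx
    have hu : HasDerivAt (fun x => f x * E x) ((f' x - g x * f x) * E x) x :=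
      ((hf x hmem').fun_mul (hGx hmem' a (left_mem_Icc.2 hab)).fun_neg.exp).congr_deriv
        (by ring)
    have hE1 : E x ≤ 1 := Real.exp_le_one_iff.2 (neg_nonpos.2 (hG_nonneg x hmem'))
    rw [hu.deriv]
    calc (f' x - g x * f x) * E x ≤ h x * E x :=
          mul_le_mul_of_nonneg_right (by linarith [hx hmem]) (Real.exp_nonneg _)
      _ ≤ h x := mul_le_of_le_one_right (hhx hmem) hE1
  have hintegrated := (hfAC.fun_mul hEAC).sub_le_integral_of_ae_deriv_le hab hh hderiv_le
  have hEa : E a = 1 := by simp [E, G]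
  calc f b = f b * E b * Real.exp (G b) := by simp [E, mul_assoc, ← Real.exp_add]
    _ ≤ (f a + ∫ x in a..b, h x) * Real.exp (G b) := by
      gcongr
      rw [hEa, mul_one] at hintegrated
      linarith

theorem uniform_gronwall_general (t₀ r a₁ a₂ a₃ : ℝ) (f f' g h : ℝ → ℝ)
    (hr : 0 < r) (ha₃ : 0 < a₃)
    (hf0 : ∀ t, t₀ < t → 0 ≤ f t) (hg0 : ∀ t, t₀ < t → 0 ≤ g t)
    (hh0 : ∀ t, t₀ < t → 0 ≤ h t)
    (hderiv : ∀ t, t₀ < t → HasDerivAt f (f' t) t)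
    (hf'int : ∀ s t, t₀ ≤ s → IntervalIntegrable f' volume s t)
    (hfint : ∀ s t, t₀ ≤ s → IntervalIntegrable f volume s t)
    (hgint : ∀ s t, t₀ ≤ s → IntervalIntegrable g volume s t)
    (hhint : ∀ s t, t₀ ≤ s → IntervalIntegrable h volume s t)
    (hineq : ∀ t, t₀ < t → f' t ≤ g t * f t + h t)
    (hf : ∀ t, t₀ ≤ t → (∫ s in t..(t + r), f s) ≤ a₁)
    (hg : ∀ t, t₀ ≤ t → (∫ s in t..(t + r), g s) ≤ a₂)
    (hh : ∀ t, t₀ ≤ t → (∫ s in t..(t + r), h s) ≤ a₃) :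
    ∀ t, t₀ ≤ t → f (t + r) ≤ (a₁ / r + a₃) * Real.exp a₂ := by
  intro t ht
  have htail : ∀ φ : ℝ → ℝ, (∀ x, t₀ < x → 0 ≤ φ x) →
      (∀ s t, t₀ ≤ s → IntervalIntegrable φ volume s t) →
      ∀ s ∈ Ioc t (t + r), ∫ x in s..t + r, φ x ≤ ∫ x in t..t + r, φ x :=
    fun φ hφ0 hφ s hs => integral_mono_interval hs.1.le hs.2 le_rfl
      ((ae_restrict_iff' measurableSet_Ioc).2 (ae_of_all _ fun x hx => hφ0 x (ht.trans_lt hx.1)))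
      (hφ t (t + r) ht)
  have hpointwise : ∀ s ∈ Ioc t (t + r), f (t + r) / Real.exp a₂ - a₃ ≤ f s := by
    intro s hs
    have hs₀ : t₀ < s := ht.trans_lt hs.1
    have hgron := le_mul_exp_integral_of_deriv_le_mul_add hs.2
      (fun x hx => hderiv x (hs₀.trans_le hx.1)) (hf'int _ _ hs₀.le) (hgint _ _ hs₀.le)
      (hhint _ _ hs₀.le) (ae_of_all _ fun x hx => hg0 x (hs₀.trans hx.1))
      (ae_of_all _ fun x hx => hh0 x (hs₀.trans hx.1))
      (ae_of_all _ fun x hx => hineq x (hs₀.trans hx.1))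
    rw [sub_le_iff_le_add, div_le_iff₀ (Real.exp_pos _)]
    calc f (t + r) ≤ _ := hgron
      _ ≤ (f s + a₃) * Real.exp a₂ := by
        have : 0 ≤ f s + a₃ := add_nonneg (hf0 s hs₀) ha₃.le
        gcongr
        · exact (htail h hh0 hhint s hs).trans (hh t ht)
        · exact (htail g hg0 hgint s hs).trans (hg t ht)
  have havg := integral_ge_of_const_le (by linarith) hpointwise (hfint t (t + r) ht)
  rw [add_sub_cancel_left] at havg
  have hmean := (le_div_iff₀' hr).2 (havg.trans (hf t ht))
  rwa [sub_le_iff_le_add, div_le_iff₀ (Real.exp_pos _)] at hmean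

/-- Uniform Gronwall lemma (Temam, Ch. III, Lemma 1.1). -/
theorem uniform_gronwall (t₀ r a₁ a₂ a₃ : ℝ) (f f' g h : ℝ → ℝ)
    (hr : 0 < r) (ha₁ : 0 < a₁) (ha₂ : 0 < a₂) (ha₃ : 0 < a₃)
    (hf0 : ∀ t, t₀ < t → 0 ≤ f t) (hg0 : ∀ t, t₀ < t → 0 ≤ g t)
    (hh0 : ∀ t, t₀ < t → 0 ≤ h t)
    (hderiv : ∀ t, t₀ < t → HasDerivAt f (f' t) t)
    (hf'int : ∀ s t, t₀ ≤ s → IntervalIntegrable f' volume s t)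
    (hfint : ∀ s t, t₀ ≤ s → IntervalIntegrable f volume s t)
    (hgint : ∀ s t, t₀ ≤ s → IntervalIntegrable g volume s t)
    (hhint : ∀ s t, t₀ ≤ s → IntervalIntegrable h volume s t)
    (hineq : ∀ t, t₀ < t → f' t ≤ g t * f t + h t)
    (hf : ∀ t, t₀ ≤ t → (∫ s in t..(t + r), f s) ≤ a₁)
    (hg : ∀ t, t₀ ≤ t → (∫ s in t..(t + r), g s) ≤ a₂)
    (hh : ∀ t, t₀ ≤ t → (∫ s in t..(t + r), h s) ≤ a₃) :
    ∀ t, t₀ ≤ t → f (t + r) ≤ (a₁ / r + a₃) * Real.exp a₂ :=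
  uniform_gronwall_general t₀ r a₁ a₂ a₃ f f' g h hr ha₃ hf0 hg0 hh0 hderiv hf'int hfint hgint hhint
    hineq hf hg hh
end
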